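/- Let Φ be a smooth representation of GL(n,ℝ) on ℝ^m with infinitesimal representation φ, and let Λ : GL(n,ℝ) × ℝ^m → ℝ be smooth. Let (w_k)_{k∈ℤ} be a sequence in GL(n,ℝ) and (p_k)_{k∈ℤ} a sequence in ℝ^m with p_{k+1} = Φ(w_k)·p_k for all k. Then the following are equivalent: (i) for every pair of integers k₀ < k₁ and every sequence (η_k) in M(n,ℝ) with η_{k₀} = η_{k₁} = 0, the function ε ↦ Σ_{k=k₀}^{k₁−1} Λ( exp(ε(η_{k+1} − w_kη_kw_k⁻¹))·w_k, p_k + ε·φ(η_k)·p_k ) has vanishing derivative at ε = 0; (ii) for every k ∈ ℤ and every η ∈ M(n,ℝ), the discrete Euler–Poincaré equation holds: d/dε Λ(exp(ε w_kηw_k⁻¹)·w_k, p_k)|_{ε=0} = d/dε Λ(exp(εη)·w_{k−1}, p_{k−1})|_{ε=0} + (D_pΛ(w_k,p_k))(φ(η)·p_k), where D_pΛ(w,p) is the partial Fréchet derivative of Λ in its second argument. (This is the right discrete Euler–Poincaré equation Ad*w_k·m_{k+1} = m_k − ∇_pΛ(w_k,p_k) ⋄ p_k, with m_k = d_wΛ(w_{k−1},p_{k−1});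 Theorem 2(a).) -/

import Mathlib

/- STATEMENT 13 (Theorem 2(a), variational form): for a smooth representation Φ of
GL(n,ℝ) on ℝ^m with infinitesimal representation φ, a smooth reduced Lagrangian
Λ : GL(n,ℝ) × ℝ^m → ℝ, and sequences with p_{k+1} = Φ(w_k)·p_k, stationarity of
Σ Λ(w_k, p_k) under the admissible variations
w̃_k = exp(ε(η_{k+1} − Ad(w_k)·η_k))·w_k, p̃_k = p_k + ε·φ(η_k)·p_k (η fixed at
endpoints) is equivalent to the right discrete Euler–Poincaré equations
Ad*w_k·m_{k+1} = m_k − ∇_pΛ(w_k,p_k) ⋄ p_k, m_k = d_wΛ(w_{k−1},p_{k−1}). -/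

open Matrix NormedSpace
open scoped Nat

/-- Type synonym for square matrices, endowed below with the `L∞` operator norm,
which makes it a normed algebra so that the derivative of the matrix exponential
is available. -/
def RDEPMat (n : ℕ) : Type := Matrix (Fin n) (Fin n) ℝ

noncomputable instance (n : ℕ) : NormedRing (RDEPMat n) := Matrix.linftyOpNormedRing
noncomputable instance (n : ℕ) : NormedAlgebra ℝ (RDEPMat n) := Matrix.linftyOpNormedAlgebra
instance (n : ℕ) : FiniteDimensional ℝ (RDEPMat n) :=
  inferInstanceAs (FiniteDimensional ℝ (Matrix (Fin n) (Fin n) ℝ))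
instance (n : ℕ) : CompleteSpace (RDEPMat n) := FiniteDimensional.complete ℝ (RDEPMat n)

lemma RDEPMat.hasDerivAt_exp (n : ℕ) (ξ : RDEPMat n) :
    HasDerivAt (fun ε : ℝ => exp (ε • ξ)) ξ 0 := by
  simpa using hasDerivAt_exp_smul_const (𝕂 := ℝ) ξ 0

attribute [local instance] Matrix.normedAddCommGroup Matrix.normedSpace

/-- The identity, as a continuous linear map from the `L∞`-operator-norm copy of the
matrices to the sup-norm matrices. -/
noncomputable def RDEPT (n : ℕ) : RDEPMat n →L[ℝ] Matrix (Fin n) (Fin n) ℝ :=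
  { toLinearMap :=
      { toFun := fun x => x
        map_add' := fun _ _ => rfl
        map_smul' := fun _ _ => rfl }
    cont := by exact LinearMap.continuous_of_finiteDimensional (𝕜 := ℝ) ({ toFun := fun x => x, map_add' := fun _ _ => rfl, map_smul' := fun _ _ => rfl } : RDEPMat n →ₗ[ℝ] Matrix (Fin n) (Fin n) ℝ) }

lemma RDEP.exp_eq (n : ℕ) (y : Matrix (Fin n) (Fin n) ℝ) :
    exp y = RDEPT n (exp (show RDEPMat n from y)) := by
  have h := NormedSpace.expSeries_hasSum_exp (𝕂 := ℝ) (show RDEPMat n from y)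
  have h2 : HasSum (fun k : ℕ => RDEPT n (expSeries ℝ (RDEPMat n) k fun _ => y))
      (RDEPT n (exp (show RDEPMat n from y))) := (RDEPT n).hasSum h
  have h3 : HasSum (fun k : ℕ => (k !⁻¹ : ℝ) • y ^ k)
      (RDEPT n (exp (show RDEPMat n from y))) := by
    have e : (fun k : ℕ => RDEPT n (expSeries ℝ (RDEPMat n) k fun _ => y))
        = fun k : ℕ => (k !⁻¹ : ℝ) • y ^ k := by
      funext k
      rw [NormedSpace.expSeries_apply_eq (𝕂 := ℝ) (show RDEPMat n from y) k]
      rfl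
    rwa [e] at h2
  conv_lhs => rw [NormedSpace.exp_eq_tsum (𝕂 := ℝ)]
  exact h3.tsum_eq

lemma RDEP.hasDerivAt_exp_mul {n : ℕ} (W ξ : Matrix (Fin n) (Fin n) ℝ) :
    HasDerivAt (fun ε : ℝ => exp (ε • ξ) * W) (ξ * W) 0 := by
  let R : RDEPMat n →L[ℝ] Matrix (Fin n) (Fin n) ℝ :=
    (LinearMap.mulRight ℝ W).toContinuousLinearMap.comp (RDEPT n)
  have h := R.hasFDerivAt.comp_hasDerivAt 0
    (RDEPMat.hasDerivAt_exp n (show RDEPMat n from ξ))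
  have e : (R ∘ fun ε : ℝ => exp (ε • (show RDEPMat n from ξ)))
      = fun ε : ℝ => exp (ε • ξ) * W := by
    funext ε
    show RDEPT n (exp (ε • (show RDEPMat n from ξ))) * W = exp (ε • ξ) * W
    rw [RDEP.exp_eq n (ε • ξ)]
    rfl
  exact h.congr_of_eventuallyEq (Filter.Eventually.of_forall fun ε => (congrFun e ε).symm)

lemma RDEP.isOpen_units (n m : ℕ) :
    IsOpen {q : Matrix (Fin n) (Fin n) ℝ × (Fin m → ℝ) | IsUnit q.1} := by
  have h1 : IsOpen {A : Matrix (Fin n) (Fin n) ℝ | IsUnit A} := by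
    have e : {A : Matrix (Fin n) (Fin n) ℝ | IsUnit A}
        = (fun A : Matrix (Fin n) (Fin n) ℝ => A.det) ⁻¹' ({0}ᶜ) := by
      ext A
      simp [Matrix.isUnit_iff_isUnit_det, isUnit_iff_ne_zero]
    rw [e]
    exact IsOpen.preimage (Continuous.matrix_det continuous_id)
      (isOpen_compl_iff.mpr isClosed_singleton)
  exact h1.preimage continuous_fst

lemma RDEP.key_hasDerivAt {n m : ℕ}
    (Λ : Matrix (Fin n) (Fin n) ℝ → (Fin m → ℝ) → ℝ)
    (hΛ : ContDiffOn ℝ (⊤ : ℕ∞)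
      (fun q : Matrix (Fin n) (Fin n) ℝ × (Fin m → ℝ) => Λ q.1 q.2) {q | IsUnit q.1})
    (W : Matrix (Fin n) (Fin n) ℝ) (hW : IsUnit W) (v u : Fin m → ℝ)
    (ξ : Matrix (Fin n) (Fin n) ℝ) :
    HasDerivAt (fun ε : ℝ => Λ (exp (ε • ξ) * W) (v + ε • u))
      (fderiv ℝ (fun q : Matrix (Fin n) (Fin n) ℝ × (Fin m → ℝ) => Λ q.1 q.2) (W, v)
        (ξ * W, u)) 0 := by
  have hd : DifferentiableAt ℝ
      (fun q : Matrix (Fin n) (Fin n) ℝ × (Fin m → ℝ) => Λ q.1 q.2) (W, v) :=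
    (hΛ.contDiffAt ((RDEP.isOpen_units n m).mem_nhds hW)).differentiableAt (by simp)
  have h1 : HasDerivAt (fun ε : ℝ => exp (ε • ξ) * W) (ξ * W) 0 :=
    RDEP.hasDerivAt_exp_mul W ξ
  have h2 : HasDerivAt (fun ε : ℝ => v + ε • u) u 0 := by
    simpa using ((hasDerivAt_id (0 : ℝ)).smul_const u).const_add v
  have h3 : HasDerivAt (fun ε : ℝ =>
      ((exp (ε • ξ) * W, v + ε • u) : Matrix (Fin n) (Fin n) ℝ × (Fin m → ℝ)))
      (ξ * W, u) 0 := h1.prodMk h2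
  have h4 := hd.hasFDerivAt.comp_hasDerivAt_of_eq 0 h3
    (by simp [NormedSpace.exp_zero])
  exact h4

lemma RDEP.sum_sub_telescope (f : ℤ → ℝ) {a b : ℤ} (h : a ≤ b) :
    ∑ k ∈ Finset.Ico a b, (f (k + 1) - f k) = f b - f a := by
  refine Int.le_induction
    (motive := fun b _ => ∑ k ∈ Finset.Ico a b, (f (k + 1) - f k) = f b - f a) ?_ ?_ b h
  · simp
  · intro b hb ih
    have e : Finset.Ico a (b + 1) = insert b (Finset.Ico a b) := by
      ext x
      simp only [Finset.mem_Ico, Finset.mem_insert]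
      omega
    rw [e, Finset.sum_insert (by simp [Finset.mem_Ico]), ih]
    ring

/-- The infinitesimal representation φ(ξ)·v := d/dε (Φ(exp(εξ))·v)|₀ associated to
a representation Φ of GL(n,ℝ) on ℝ^m. -/
noncomputable def infRep (n m : ℕ)
    (Φ : Matrix (Fin n) (Fin n) ℝ → ((Fin m → ℝ) →L[ℝ] (Fin m → ℝ)))
    (ξ : Matrix (Fin n) (Fin n) ℝ) (v : Fin m → ℝ) : Fin m → ℝ :=
  deriv (fun ε : ℝ => Φ (exp (ε • ξ)) v) 0

lemma infRep_zero (n m : ℕ)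
    (Φ : Matrix (Fin n) (Fin n) ℝ → ((Fin m → ℝ) →L[ℝ] (Fin m → ℝ)))
    (v : Fin m → ℝ) : infRep n m Φ 0 v = 0 := by
  have e : (fun ε : ℝ => Φ (exp (ε • (0 : Matrix (Fin n) (Fin n) ℝ))) v)
      = fun _ : ℝ => Φ 1 v := by
    funext ε
    rw [smul_zero, NormedSpace.exp_zero]
  rw [infRep, e, deriv_const]

theorem right_discrete_euler_poincare (n m : ℕ)
    (Φ : Matrix (Fin n) (Fin n) ℝ → ((Fin m → ℝ) →L[ℝ] (Fin m → ℝ)))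
    (hΦone : Φ 1 = 1)
    (hΦmul : ∀ A B : Matrix (Fin n) (Fin n) ℝ, IsUnit A → IsUnit B →
      Φ (A * B) = (Φ A).comp (Φ B))
    (hΦsmooth : ContDiffOn ℝ (⊤ : ℕ∞)
      (fun p : Matrix (Fin n) (Fin n) ℝ × (Fin m → ℝ) => Φ p.1 p.2)
      {p | IsUnit p.1})
    (Λ : Matrix (Fin n) (Fin n) ℝ → (Fin m → ℝ) → ℝ)
    (hΛ : ContDiffOn ℝ (⊤ : ℕ∞)
      (fun p : Matrix (Fin n) (Fin n) ℝ × (Fin m → ℝ) => Λ p.1 p.2)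
      {p | IsUnit p.1})
    (w : ℤ → Matrix (Fin n) (Fin n) ℝ) (hw : ∀ k, IsUnit (w k))
    (p : ℤ → (Fin m → ℝ)) (hp : ∀ k, p (k + 1) = Φ (w k) (p k)) :
    (∀ k₀ k₁ : ℤ, k₀ < k₁ → ∀ η : ℤ → Matrix (Fin n) (Fin n) ℝ,
        η k₀ = 0 → η k₁ = 0 →
      deriv (fun ε : ℝ => ∑ k ∈ Finset.Ico k₀ k₁,
        Λ (exp (ε • (η (k + 1) - w k * η k * (w k)⁻¹)) * w k)
          (p k + ε • infRep n m Φ (η k) (p k))) 0 = 0)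
    ↔
    (∀ k : ℤ, ∀ η : Matrix (Fin n) (Fin n) ℝ,
      deriv (fun ε : ℝ => Λ (exp (ε • (w k * η * (w k)⁻¹)) * w k) (p k)) 0
        = deriv (fun ε : ℝ => Λ (exp (ε • η) * w (k - 1)) (p (k - 1))) 0
          + fderiv ℝ (fun v => Λ (w k) v) (p k) (infRep n m Φ η (p k))) := by
  set F : Matrix (Fin n) (Fin n) ℝ × (Fin m → ℝ) → ℝ := fun q => Λ q.1 q.2 with hF
  set L : ℤ → (Matrix (Fin n) (Fin n) ℝ × (Fin m → ℝ) →L[ℝ] ℝ) :=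
    fun k => fderiv ℝ F (w k, p k) with hL
  have key : ∀ (k : ℤ) (ξ : Matrix (Fin n) (Fin n) ℝ) (u : Fin m → ℝ),
      HasDerivAt (fun ε : ℝ => Λ (exp (ε • ξ) * w k) (p k + ε • u))
        (L k (ξ * w k, u)) 0 := fun k ξ u =>
    RDEP.key_hasDerivAt Λ hΛ (w k) (hw k) (p k) u ξ
  have keyderiv : ∀ (k : ℤ) (ξ : Matrix (Fin n) (Fin n) ℝ),
      deriv (fun ε : ℝ => Λ (exp (ε • ξ) * w k) (p k)) 0 = L k (ξ * w k, 0) := by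
    intro k ξ
    have h := key k ξ 0
    have e : (fun ε : ℝ => Λ (exp (ε • ξ) * w k) (p k + ε • (0 : Fin m → ℝ)))
        = fun ε : ℝ => Λ (exp (ε • ξ) * w k) (p k) := by
      funext ε; simp
    rw [e] at h
    exact h.deriv
  have keypartial : ∀ (k : ℤ) (u : Fin m → ℝ),
      fderiv ℝ (fun v => Λ (w k) v) (p k) u = L k (0, u) := by
    intro k u
    have hd : DifferentiableAt ℝ F (w k, p k) :=
      (hΛ.contDiffAt ((RDEP.isOpen_units n m).mem_nhds (hw k))).differentiableAt (by simp)
    have hcomp : HasFDerivAt (fun v : Fin m → ℝ => Λ (w k) v)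
        ((L k).comp (ContinuousLinearMap.inr ℝ (Matrix (Fin n) (Fin n) ℝ) (Fin m → ℝ)))
        (p k) := by
      have := hd.hasFDerivAt.comp (p k) (hasFDerivAt_prodMk_right (𝕜 := ℝ) (w k) (p k))
      exact this
    rw [hcomp.fderiv]
    simp
  -- reformulated Euler–Poincaré equation
  have EPiff : ∀ (k : ℤ) (η : Matrix (Fin n) (Fin n) ℝ),
      (deriv (fun ε : ℝ => Λ (exp (ε • (w k * η * (w k)⁻¹)) * w k) (p k)) 0
        = deriv (fun ε : ℝ => Λ (exp (ε • η) * w (k - 1)) (p (k - 1))) 0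
          + fderiv ℝ (fun v => Λ (w k) v) (p k) (infRep n m Φ η (p k)))
      ↔ (L k ((w k * η * (w k)⁻¹) * w k, 0)
        = L (k - 1) (η * w (k - 1), 0) + L k (0, infRep n m Φ η (p k))) := by
    intro k η
    rw [keyderiv k, keyderiv (k - 1), keypartial k]
  have hsum : ∀ (k₀ k₁ : ℤ) (η : ℤ → Matrix (Fin n) (Fin n) ℝ),
      deriv (fun ε : ℝ => ∑ k ∈ Finset.Ico k₀ k₁,
        Λ (exp (ε • (η (k + 1) - w k * η k * (w k)⁻¹)) * w k)
          (p k + ε • infRep n m Φ (η k) (p k))) 0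
      = ∑ k ∈ Finset.Ico k₀ k₁,
          L k ((η (k + 1) - w k * η k * (w k)⁻¹) * w k, infRep n m Φ (η k) (p k)) := by
    intro k₀ k₁ η
    exact (HasDerivAt.fun_sum fun k _ =>
      key k (η (k + 1) - w k * η k * (w k)⁻¹) (infRep n m Φ (η k) (p k))).deriv
  constructor
  · -- variational principle ⇒ EP equations
    intro hvar k η
    rw [EPiff k η]
    set ηs : ℤ → Matrix (Fin n) (Fin n) ℝ := fun j => if j = k then η else 0 with hηs
    have hsk : ηs k = η := by simp [hηs]
    have hsk0 : ηs (k - 1) = 0 := by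
      simp only [hηs, if_neg (show ¬((k : ℤ) - 1 = k) by omega)]
    have hsk1 : ηs (k + 1) = 0 := by
      simp only [hηs, if_neg (show ¬((k : ℤ) + 1 = k) by omega)]
    have hv := hvar (k - 1) (k + 1) (by omega) ηs hsk0 hsk1
    rw [hsum (k - 1) (k + 1) ηs] at hv
    have epair : Finset.Ico (k - 1) (k + 1) = {k - 1, k} := by
      ext x
      simp only [Finset.mem_Ico, Finset.mem_insert, Finset.mem_singleton]
      omega
    rw [epair, Finset.sum_pair (by omega : k - 1 ≠ k)] at hv
    rw [show k - 1 + 1 = k from by omega, hsk, hsk0, hsk1] at hv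
    rw [infRep_zero] at hv
    rw [mul_zero, zero_mul, sub_zero] at hv
    have e2 : ((0 - w k * η * (w k)⁻¹) * w k, infRep n m Φ η (p k))
        = -((w k * η * (w k)⁻¹ * w k, (0 : Fin m → ℝ)))
          + ((0 : Matrix (Fin n) (Fin n) ℝ), infRep n m Φ η (p k)) := by
      rw [Prod.ext_iff]
      constructor
      · show (0 - w k * η * (w k)⁻¹) * w k = -(w k * η * (w k)⁻¹ * w k) + 0
        rw [zero_sub, neg_mul, add_zero]
      · show infRep n m Φ η (p k) = -0 + infRep n m Φ η (p k)
        rw [neg_zero, zero_add]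
    rw [e2, map_add, map_neg] at hv
    linarith
  · -- EP equations ⇒ variational principle
    intro hEP k₀ k₁ hlt η h0 h1
    rw [hsum k₀ k₁ η]
    have hterm : ∀ j ∈ Finset.Ico k₀ k₁,
        L j ((η (j + 1) - w j * η j * (w j)⁻¹) * w j, infRep n m Φ (η j) (p j))
        = L j (η (j + 1) * w j, 0) - L (j - 1) (η j * w (j - 1), 0) := by
      intro j _
      have hEPj := (EPiff j (η j)).mp (hEP j (η j))
      have edec : ((η (j + 1) - w j * η j * (w j)⁻¹) * w j, infRep n m Φ (η j) (p j))
          = (η (j + 1) * w j, (0 : Fin m → ℝ))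
            - (w j * η j * (w j)⁻¹ * w j, (0 : Fin m → ℝ))
            + ((0 : Matrix (Fin n) (Fin n) ℝ), infRep n m Φ (η j) (p j)) := by
        rw [Prod.ext_iff]
        constructor
        · show (η (j + 1) - w j * η j * (w j)⁻¹) * w j
            = η (j + 1) * w j - w j * η j * (w j)⁻¹ * w j + 0
          rw [sub_mul, add_zero]
        · show infRep n m Φ (η j) (p j) = 0 - 0 + infRep n m Φ (η j) (p j)
          rw [sub_zero, zero_add]
      rw [edec, map_add, map_sub]
      linarith
    rw [Finset.sum_congr rfl hterm]
    have htel := RDEP.sum_sub_telescope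
      (fun j => L (j - 1) (η j * w (j - 1), 0)) hlt.le
    simp only [add_sub_cancel_right] at htel
    rw [htel, h0, h1]
    simp [Prod.mk_zero_zero]
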